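/- arXiv:cs/0510039 — 5 statements merged into one kernel-verified Lean document; each statement's English description precedes it below -/
import Mathlib

section
/- XY-routing on a full grid follows a shortest path: the number of steps it takes equals the graph distance (Manhattan distance) between source and destination in the grid graph. -/
/-- One step of XY-routing toward destination `dst`. -/
def xyStep (dst p : ℤ × ℤ) : ℤ × ℤ :=
  if p.1 ≠ dst.1 then (p.1 + (if p.1 < dst.1 then 1 else -1), p.2)
  else if p.2 ≠ dst.2 then (p.1, p.2 + (if p.2 < dst.2 then 1 else -1))
  else p

/-- The grid graph on ℤ × ℤ: vertices adjacent iff they differ by 1 in exactly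
one coordinate. -/
def gridGraph : SimpleGraph (ℤ × ℤ) :=
  SimpleGraph.fromRel (fun u v => (u.1 - v.1).natAbs + (u.2 - v.2).natAbs = 1)

namespace XYAux

/-- Manhattan distance to `d`. -/
def M (d p : ℤ × ℤ) : ℕ := (p.1 - d.1).natAbs + (p.2 - d.2).natAbs

lemma M_eq_zero {d p : ℤ × ℤ} : M d p = 0 ↔ p = d := by
  cases p; cases d; simp only [M, Prod.mk.injEq]; omega

lemma adj_iff {u v : ℤ × ℤ} :
    gridGraph.Adj u v ↔ u ≠ v ∧ ((u.1 - v.1).natAbs + (u.2 - v.2).natAbs = 1 ∨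
      (v.1 - u.1).natAbs + (v.2 - u.2).natAbs = 1) := by
  simp [gridGraph, SimpleGraph.fromRel_adj]

lemma adj_step {d p : ℤ × ℤ} (h : p ≠ d) : gridGraph.Adj p (xyStep d p) := by
  obtain ⟨p1, p2⟩ := p; obtain ⟨d1, d2⟩ := d
  rw [adj_iff]
  simp only [xyStep, ne_eq, Prod.mk.injEq] at *
  split_ifs <;> simp_all <;> omega

lemma M_step {d p : ℤ × ℤ} (h : p ≠ d) : M d (xyStep d p) + 1 = M d p := by
  obtain ⟨p1, p2⟩ := p; obtain ⟨d1, d2⟩ := d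
  simp only [xyStep, ne_eq, Prod.mk.injEq, M] at *
  split_ifs <;> simp_all <;> omega

lemma step_self (d : ℤ × ℤ) : xyStep d d = d := by
  simp [xyStep]

lemma iterate_M (d : ℤ × ℤ) : ∀ n p, M d p = n → (xyStep d)^[n] p = d := by
  intro n
  induction n with
  | zero => intro p hp; simpa using M_eq_zero.mp hp
  | succ n ih =>
    intro p hp
    have hpd : p ≠ d := by
      intro h; subst h; rw [M_eq_zero.mpr rfl] at hp; omega
    rw [Function.iterate_succ_apply]
    exact ih _ (by have := M_step hpd; omega)

lemma M_le_iterate (d : ℤ × ℤ) : ∀ k p, M d p ≤ k + M d ((xyStep d)^[k] p) := by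
  intro k
  induction k with
  | zero => intro p; simp
  | succ k ih =>
    intro p
    rw [Function.iterate_succ_apply]
    by_cases h : p = d
    · subst h; rw [M_eq_zero.mpr rfl]; omega
    · have := M_step h
      have := ih (xyStep d p)
      omega

lemma exists_walk (d : ℤ × ℤ) : ∀ n p, M d p = n → ∃ w : gridGraph.Walk p d, w.length = n := by
  intro n
  induction n with
  | zero =>
    intro p hp
    obtain rfl := M_eq_zero.mp hp
    exact ⟨SimpleGraph.Walk.nil, rfl⟩
  | succ n ih =>
    intro p hp
    have hpd : p ≠ d := by
      intro h; subst h; rw [M_eq_zero.mpr rfl] at hp; omega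
    obtain ⟨w, hw⟩ := ih (xyStep d p) (by have := M_step hpd; omega)
    exact ⟨SimpleGraph.Walk.cons (adj_step hpd) w, by simp [hw]⟩

lemma adj_M {d u v : ℤ × ℤ} (h : gridGraph.Adj u v) : M d u ≤ M d v + 1 := by
  rw [adj_iff] at h
  obtain ⟨u1, u2⟩ := u; obtain ⟨v1, v2⟩ := v; obtain ⟨d1, d2⟩ := d
  simp only [M] at *
  omega

lemma walk_le {d p : ℤ × ℤ} (w : gridGraph.Walk p d) : M d p ≤ w.length := by
  induction w with
  | nil => simp [M_eq_zero.mpr rfl]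
  | @cons u v x h w ih =>
    have := adj_M (d := x) h
    simp only [SimpleGraph.Walk.length_cons]
    omega

lemma dist_eq (s d : ℤ × ℤ) : gridGraph.dist s d = M d s := by
  obtain ⟨w, hw⟩ := exists_walk d (M d s) s rfl
  have hr : gridGraph.Reachable s d := ⟨w⟩
  have h1 : gridGraph.dist s d ≤ M d s := hw ▸ SimpleGraph.dist_le w
  obtain ⟨w', hw'⟩ := hr.exists_walk_length_eq_dist
  have h2 : M d s ≤ gridGraph.dist s d := hw' ▸ walk_le w'
  omega

end XYAux

/-- XY-routing on a full grid follows a shortest path: the number of steps it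
takes (the least `k` with `(xyStep d)^[k] s = d`) equals the graph distance
between source and destination, which is the Manhattan distance. -/
theorem xy_routing_is_shortest_path (s d : ℤ × ℤ) :
    sInf {k : ℕ | (xyStep d)^[k] s = d} = gridGraph.dist s d ∧
    gridGraph.dist s d = (s.1 - d.1).natAbs + (s.2 - d.2).natAbs := by
  have hd := XYAux.dist_eq s d
  have hmem : XYAux.M d s ∈ {k : ℕ | (xyStep d)^[k] s = d} :=
    XYAux.iterate_M d _ s rfl
  have hinf : sInf {k : ℕ | (xyStep d)^[k] s = d} = XYAux.M d s := by
    refine le_antisymm (Nat.sInf_le hmem) (le_csInf ⟨_, hmem⟩ ?_)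
    intro k hk
    have := XYAux.M_le_iterate d k s
    rw [hk, XYAux.M_eq_zero.mpr rfl] at this
    omega
  exact ⟨by rw [hinf, hd], hd⟩
end

section
/- If every placed component occupies an axis-aligned rectangle of grid cells and each such rectangle is surrounded by a full ring of active routers (i.e., the rectangle together with its unit-width boundary lies strictly inside the grid and boundary cells are not covered by any component), and distinct components' rectangles are disjoint, then the subgraph of the grid induced by the active (uncovered) routers is connected. -/
/-!
Every active router is joined to the corner `(0, 0)` by descending row by row. The bottom row is
entirely active, since each rectangle's ring lies in the grid. A router whose downward neighbour is
covered sits on the top side of the ring of the covering rectangle; it then walks along the ring to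
the ring's bottom-left corner, which lies strictly lower, and continues from there.
-/

/-- An axis-aligned rectangle `[a,b] × [c,d]` of grid cells. -/
structure Rect where
  a : ℤ
  b : ℤ
  c : ℤ
  d : ℤ
  hab : a ≤ b
  hcd : c ≤ d

/-- The set of cells covered by a rectangle. -/
def Rect.Mem (R : Rect) (p : ℤ × ℤ) : Prop :=
  R.a ≤ p.1 ∧ p.1 ≤ R.b ∧ R.c ≤ p.2 ∧ p.2 ≤ R.d

/-- The one-cell-enlarged rectangle `[a-1,b+1] × [c-1,d+1]`. -/
def Rect.EnlMem (R : Rect) (p : ℤ × ℤ) : Prop :=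
  R.a - 1 ≤ p.1 ∧ p.1 ≤ R.b + 1 ∧ R.c - 1 ≤ p.2 ∧ p.2 ≤ R.d + 1

/-- The n×m grid of routers, as the integer points `[0,n) × [0,m)`. -/
def Grid (n m : ℕ) : Set (ℤ × ℤ) :=
  {p | 0 ≤ p.1 ∧ p.1 < (n : ℤ) ∧ 0 ≤ p.2 ∧ p.2 < (m : ℤ)}

/-- Grid adjacency: differ by 1 in exactly one coordinate. -/
def adj (u v : ℤ × ℤ) : Prop := (u.1 - v.1).natAbs + (u.2 - v.2).natAbs = 1

/-- Connectivity of the subgraph of the grid induced by a set `S`: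
any two vertices of `S` are joined by a path staying in `S`. -/
def ConnOn (S : Set (ℤ × ℤ)) : Prop :=
  ∀ u ∈ S, ∀ v ∈ S,
    Relation.ReflTransGen (fun x y => adj x y ∧ x ∈ S ∧ y ∈ S) u v

open Relation

def activeSet (n m : ℕ) (P : Finset Rect) : Set (ℤ × ℤ) :=
  {p | p ∈ Grid n m ∧ ∀ R ∈ P, ¬ R.Mem p}

def HasRouterRings (n m : ℕ) (P : Finset Rect) : Prop :=
  ∀ R ∈ P, (∀ p, R.EnlMem p → p ∈ Grid n m) ∧
    (∀ p, R.EnlMem p → ¬ R.Mem p → ∀ R' ∈ P, ¬ R'.Mem p)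

def StepIn (S : Set (ℤ × ℤ)) (x y : ℤ × ℤ) : Prop :=
  adj x y ∧ x ∈ S ∧ y ∈ S

lemma adj_comm {u v : ℤ × ℤ} : adj u v ↔ adj v u := by
  unfold adj
  omega

lemma adj_add_one_left (x y : ℤ) : adj (x + 1, y) (x, y) := by
  simp [adj]

lemma adj_add_one_right (x y : ℤ) : adj (x, y + 1) (x, y) := by
  simp [adj]

instance (S : Set (ℤ × ℤ)) : Std.Symm (StepIn S) :=
  ⟨fun _ _ ⟨h, hx, hy⟩ => ⟨adj_comm.mp h, hy, hx⟩⟩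

lemma connOn_of_forall_reflTransGen {S : Set (ℤ × ℤ)} (o : ℤ × ℤ)
    (h : ∀ p ∈ S, ReflTransGen (StepIn S) p o) : ConnOn S :=
  fun u hu v hv => (h u hu).trans (ReflTransGen.stdSymm.symm _ _ (h v hv))

lemma reflTransGen_stepIn_of_chain {S : Set (ℤ × ℤ)} (f : ℤ → ℤ × ℤ)
    (hf : ∀ i, adj (f (i + 1)) (f i)) {a b : ℤ} (hab : a ≤ b)
    (hS : ∀ i, a ≤ i → i ≤ b → f i ∈ S) : ReflTransGen (StepIn S) (f b) (f a) := by
  induction b, hab using Int.leInduction with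
  | base => rfl
  | succ b hab ih =>
    exact .head ⟨hf b, hS _ (by omega) le_rfl, hS _ hab (by omega)⟩
      (ih fun i h₁ h₂ => hS i h₁ (by omega))

lemma reflTransGen_stepIn_row {S : Set (ℤ × ℤ)} {x₀ x₁ : ℤ} (y : ℤ) (hx : x₀ ≤ x₁)
    (hS : ∀ x, x₀ ≤ x → x ≤ x₁ → (x, y) ∈ S) : ReflTransGen (StepIn S) (x₁, y) (x₀, y) :=
  reflTransGen_stepIn_of_chain (fun x => (x, y)) (adj_add_one_left · y) hx hS

lemma reflTransGen_stepIn_column {S : Set (ℤ × ℤ)} (x : ℤ) {y₀ y₁ : ℤ} (hy : y₀ ≤ y₁)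
    (hS : ∀ y, y₀ ≤ y → y ≤ y₁ → (x, y) ∈ S) : ReflTransGen (StepIn S) (x, y₁) (x, y₀) :=
  reflTransGen_stepIn_of_chain (fun y => (x, y)) (adj_add_one_right x) hy hS

namespace HasRouterRings

variable {n m : ℕ} {P : Finset Rect} {R : Rect}

lemma mem_activeSet_of_ring (hP : HasRouterRings n m P) (hR : R ∈ P) {p : ℤ × ℤ}
    (hp : R.EnlMem p) (hpR : ¬ R.Mem p) : p ∈ activeSet n m P :=
  ⟨(hP R hR).1 p hp, (hP R hR).2 p hp hpR⟩

lemma corner_mem_activeSet (hP : HasRouterRings n m P) (hR : R ∈ P) :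
    (R.a - 1, R.c - 1) ∈ activeSet n m P :=
  hP.mem_activeSet_of_ring hR ⟨le_rfl, by linarith [R.hab], le_rfl, by linarith [R.hcd]⟩
    fun h => by linarith [h.1]

lemma one_le_of_mem (hP : HasRouterRings n m P) (hR : R ∈ P) {p : ℤ × ℤ} (hp : R.Mem p) :
    1 ≤ p.2 := by
  have hc : 0 ≤ R.c - 1 := (hP.corner_mem_activeSet hR).1.2.2.1
  linarith [hp.2.2.1]

lemma mk_zero_mem_activeSet (hP : HasRouterRings n m P) {x : ℤ} (hx₀ : 0 ≤ x) (hxn : x < n)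
    (hm : 0 < m) : (x, 0) ∈ activeSet n m P :=
  ⟨⟨hx₀, hxn, le_rfl, Int.natCast_pos.mpr hm⟩, fun _ hR h => by
    simpa using hP.one_le_of_mem hR h⟩

lemma reflTransGen_corner_of_top (hP : HasRouterRings n m P) (hR : R ∈ P) {x : ℤ}
    (hx₀ : R.a - 1 ≤ x) (hx₁ : x ≤ R.b + 1) :
    ReflTransGen (StepIn (activeSet n m P)) (x, R.d + 1) (R.a - 1, R.c - 1) := by
  have hab := R.hab
  have hcd := R.hcd
  refine (reflTransGen_stepIn_row _ hx₀ fun x' h₁ h₂ => ?_).trans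
    (reflTransGen_stepIn_column _ (by omega) fun y h₁ h₂ => ?_)
  · exact hP.mem_activeSet_of_ring hR ⟨h₁, by omega, by omega, le_rfl⟩
      fun h => by linarith [h.2.2.2]
  · exact hP.mem_activeSet_of_ring hR ⟨le_rfl, by omega, h₁, h₂⟩ fun h => by linarith [h.1]

/-- One step of the descent: either move down directly, or around the ring blocking the way. -/
lemma exists_reflTransGen_lower (hP : HasRouterRings n m P) {x y : ℤ}
    (hp : (x, y) ∈ activeSet n m P) (hy : 0 < y) :
    ∃ q ∈ activeSet n m P, q.2 < y ∧ ReflTransGen (StepIn (activeSet n m P)) (x, y) q := by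
  by_cases hbelow : ∃ R ∈ P, R.Mem (x, y - 1)
  · obtain ⟨R, hR, hxa, hxb, hyc, hyd⟩ := hbelow
    have hy : y = R.d + 1 := by
      by_contra hne
      exact hp.2 R hR ⟨hxa, hxb, by simp only at hyc ⊢; omega, by simp only at hyd ⊢; omega⟩
    subst hy
    exact ⟨_, hP.corner_mem_activeSet hR, by simp only at hyc ⊢; linarith [R.hcd],
      hP.reflTransGen_corner_of_top hR (by simp only at hxa; omega) (by simp only at hxb; omega)⟩
  · have hq : (x, y - 1) ∈ activeSet n m P :=
      ⟨⟨hp.1.1, hp.1.2.1, by simp only; omega, by simp only; linarith [hp.1.2.2.2]⟩,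
        fun R hR h => hbelow ⟨R, hR, h⟩⟩
    exact ⟨_, hq, by simp, .single ⟨by simp [adj], hp, hq⟩⟩

lemma reflTransGen_origin (hP : HasRouterRings n m P) {p : ℤ × ℤ}
    (hp : p ∈ activeSet n m P) : ReflTransGen (StepIn (activeSet n m P)) p (0, 0) := by
  induction hk : p.2.toNat using Nat.strong_induction_on generalizing p with
  | _ k ih =>
    obtain ⟨x, y⟩ := p
    obtain ⟨⟨hx₀, hxn, hy₀, hym⟩, -⟩ := id hp
    simp only at hx₀ hxn hy₀ hym hk
    rcases hy₀.eq_or_lt with rfl | hy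
    · exact reflTransGen_stepIn_row 0 hx₀ fun _ h₁ h₂ =>
        hP.mk_zero_mem_activeSet h₁ (by omega) (by omega)
    · obtain ⟨q, hq, hqy, hpq⟩ := hP.exists_reflTransGen_lower hp hy
      exact hpq.trans (ih _ (by omega) hq rfl)

end HasRouterRings

theorem ring_condition_implies_connected_general (n m : ℕ) (P : Finset Rect)
    (hring : ∀ R ∈ P,
      (∀ p, R.EnlMem p → p ∈ Grid n m) ∧
      (∀ p, R.EnlMem p → ¬ R.Mem p → ∀ R' ∈ P, ¬ R'.Mem p)) :
    ConnOn {p | p ∈ Grid n m ∧ ∀ R ∈ P, ¬ R.Mem p} :=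
  connOn_of_forall_reflTransGen (0, 0) fun _ hp =>
    HasRouterRings.reflTransGen_origin hring hp

/-- If every placed component occupies a rectangle, distinct rectangles are
pairwise disjoint, and each rectangle together with its unit-width ring of
routers lies inside the grid with all ring cells uncovered, then the subgraph
induced by the active (uncovered) routers is connected. -/
theorem ring_condition_implies_connected (n m : ℕ) (P : Finset Rect)
    (hdisj : ∀ R ∈ P, ∀ R' ∈ P, R ≠ R' → ∀ p, ¬ (R.Mem p ∧ R'.Mem p))
    (hring : ∀ R ∈ P,
      (∀ p, R.EnlMem p → p ∈ Grid n m) ∧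
      (∀ p, R.EnlMem p → ¬ R.Mem p → ∀ R' ∈ P, ¬ R'.Mem p)) :
    ConnOn {p | p ∈ Grid n m ∧ ∀ R ∈ P, ¬ R.Mem p} :=
  ring_condition_implies_connected_general n m P hring
end

section
/- The stamped surrounding rule for vertical blocking terminates: a packet at (x, d+1) with destination (x_d, y_d), y_d < c, blocked from below by obstacle R = [a,b]×[c,d] with a ≤ x ≤ b, when routed right along row d+1 while stamped, reaches column b+1 in exactly b+1-x steps, after which the horizontal-surrounding procedure delivers it below the obstacle; the total detour path lies entirely in the free ring and free grid cells. -/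
/-- The stamped move: keep moving in the fixed horizontal (rightward) direction. -/
def stampedStep (p : ℤ × ℤ) : ℤ × ℤ := (p.1 + 1, p.2)

lemma stamped_iter (x y : ℤ) : ∀ k : ℕ, stampedStep^[k] (x, y) = (x + k, y) := by
  intro k
  induction k with
  | zero => simp
  | succ n ih =>
    rw [Function.iterate_succ_apply', ih]
    simp only [stampedStep, Prod.mk.injEq]
    constructor
    · push_cast; ring
    · trivial

lemma xy_y_le (dst : ℤ × ℤ) (m : ℤ) (hd : dst.2 ≤ m) :
    ∀ (k : ℕ) (p : ℤ × ℤ), p.2 ≤ m → ((xyStep dst)^[k] p).2 ≤ m := by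
  intro k
  induction k with
  | zero => intro p hp; simpa using hp
  | succ n ih =>
    intro p hp
    rw [Function.iterate_succ_apply]
    apply ih
    unfold xyStep
    split_ifs <;> first | omega | (simp; omega)

lemma xy_reaches (dst : ℤ × ℤ) :
    ∀ (n : ℕ) (p : ℤ × ℤ), (p.1 - dst.1).natAbs + (p.2 - dst.2).natAbs = n →
      ∃ k, (xyStep dst)^[k] p = dst := by
  intro n
  induction n using Nat.strong_induction_on with
  | _ n ih =>
    intro p hp
    by_cases h : p = dst
    · exact ⟨0, by simp [h]⟩
    · have hne : p.1 ≠ dst.1 ∨ p.2 ≠ dst.2 := by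
        by_contra hc; push_neg at hc; exact h (Prod.ext hc.1 hc.2)
      have hm : ((xyStep dst p).1 - dst.1).natAbs + ((xyStep dst p).2 - dst.2).natAbs < n := by
        subst hp
        unfold xyStep
        split_ifs <;> simp_all <;> omega
      obtain ⟨k, hk⟩ := ih _ hm (xyStep dst p) rfl
      exact ⟨k + 1, by rw [Function.iterate_succ_apply]; exact hk⟩

/-- The stamped surrounding rule for vertical blocking terminates: a packet at
`(x, d+1)` with destination below the obstacle `R = [a,b]×[c,d]` (`y_d < c`,
`a ≤ x ≤ b`), routed rightward while stamped, reaches column `b+1` in exactly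
`b+1-x` steps through free cells; then the column `b+1` down to row `c-1` is
free, and from `(b+1, c-1)` XY-routing delivers the packet below the obstacle,
never re-entering `R`. -/
theorem stamped_rule_terminates (R : Rect) (x : ℤ) (dst : ℤ × ℤ)
    (hx : R.a ≤ x ∧ x ≤ R.b) (hdst : dst.2 < R.c) (hfree : ¬ R.Mem dst) :
    (stampedStep^[(R.b + 1 - x).toNat] (x, R.d + 1) = (R.b + 1, R.d + 1)) ∧
    (∀ k : ℕ, (k : ℤ) ≤ R.b + 1 - x → ¬ R.Mem (stampedStep^[k] (x, R.d + 1))) ∧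
    (∀ t, R.c - 1 ≤ t → t ≤ R.d + 1 → ¬ R.Mem (R.b + 1, t)) ∧
    (∀ k, ¬ R.Mem ((xyStep dst)^[k] (R.b + 1, R.c - 1))) ∧
    (∃ k, (xyStep dst)^[k] (R.b + 1, R.c - 1) = dst) := by
  obtain ⟨hax, hxb⟩ := hx
  refine ⟨?_, ?_, ?_, ?_, ?_⟩
  · rw [stamped_iter]
    have : ((R.b + 1 - x).toNat : ℤ) = R.b + 1 - x := Int.toNat_of_nonneg (by omega)
    rw [this]; ring_nf
  · intro k _ hmem
    rw [stamped_iter] at hmem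
    obtain ⟨_, _, _, h4⟩ := hmem
    simp at h4
  · intro t _ _ hmem
    obtain ⟨_, h2, _, _⟩ := hmem
    simp at h2
  · intro k hmem
    have hy := xy_y_le dst (R.c - 1) (by omega) k (R.b + 1, R.c - 1) (by simp)
    obtain ⟨_, _, h3, _⟩ := hmem
    omega
  · exact xy_reaches dst _ (R.b + 1, R.c - 1) rfl
end

section
/- Graph distance lower bound for detours: if source (x_s, y) and destination (x_d, y) lie in the same row with x_d < a ≤ b < x_s and the obstacle R = [a,b]×[c,d] satisfies c ≤ y ≤ d, then every path of active vertices from source to destination has length at least |x_s - x_d| + 2·min(y - (c-1), (d+1) - y). -/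
/-!
A path of active vertices from `(x_s, y)` to `(x_d, y)` must cross the column `x = a` of the
obstacle's left side, and it can only do so at a vertex `p` above or below the obstacle.
Each edge changes the Manhattan distance by at most one, so the path is at least as long as
`|(x_s, y) - p|₁ + |p - (x_d, y)|₁`, which is `|x_s - x_d| + 2 |y - p.2|`.
-/

def manhattan (u v : ℤ × ℤ) : ℕ := (u.1 - v.1).natAbs + (u.2 - v.2).natAbs

theorem manhattan_add_one_le_length {l : List (ℤ × ℤ)} {u v : ℤ × ℤ} (hchain : l.IsChain adj)
    (hhead : l.head? = some u) (hlast : l.getLast? = some v) :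
    manhattan u v + 1 ≤ l.length := by
  induction l generalizing u with
  | nil => simp at hhead
  | cons a t ih =>
    obtain rfl : a = u := by simpa using hhead
    cases t with
    | nil =>
      obtain rfl : a = v := by simpa using hlast
      simp [manhattan]
    | cons w t =>
      have hadj : adj a w := (List.isChain_cons_cons.mp hchain).1
      have hw := ih (List.isChain_cons_cons.mp hchain).2 rfl (by simpa using hlast)
      simp only [adj, manhattan, List.length_cons] at hadj hw ⊢
      omega

/-- A discrete intermediate value theorem for grid paths, keeping track of the length. -/
theorem exists_mem_fst_eq_of_chain {l : List (ℤ × ℤ)} {u v : ℤ × ℤ} {t : ℤ}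
    (hchain : l.IsChain adj) (hhead : l.head? = some u) (hlast : l.getLast? = some v)
    (hvt : v.1 ≤ t) (htu : t ≤ u.1) :
    ∃ p ∈ l, p.1 = t ∧ manhattan u p + manhattan p v + 1 ≤ l.length := by
  induction l generalizing u with
  | nil => simp at hhead
  | cons a s ih =>
    obtain rfl : a = u := by simpa using hhead
    by_cases hat : a.1 = t
    · refine ⟨a, List.mem_cons_self .., hat, ?_⟩
      simpa [manhattan] using manhattan_add_one_le_length hchain hhead hlast
    cases s with
    | nil =>
      obtain rfl : a = v := by simpa using hlast
      omega
    | cons w s =>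
      have hadj : adj a w := (List.isChain_cons_cons.mp hchain).1
      simp only [adj] at hadj
      obtain ⟨p, hp, hpt, hlen⟩ :=
        ih (List.isChain_cons_cons.mp hchain).2 rfl (by simpa using hlast) (by omega)
      refine ⟨p, List.mem_cons_of_mem _ hp, hpt, ?_⟩
      simp only [manhattan, List.length_cons] at hlen ⊢
      omega

theorem detour_lower_bound_general (R : Rect) (xs xd y : ℤ)
    (hx : xd < R.a ∧ R.b < xs)
    (l : List (ℤ × ℤ))
    (hhead : l.head? = some (xs, y)) (hlast : l.getLast? = some (xd, y))
    (hchain : l.Chain' adj)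
    (hactive : ∀ p ∈ l, ¬ R.Mem p) :
    (xs - xd).natAbs + 2 * min (y - (R.c - 1)).toNat ((R.d + 1) - y).toNat + 1
      ≤ l.length := by
  have hab := R.hab
  obtain ⟨p, hpl, hpa, hlen⟩ :=
    exists_mem_fst_eq_of_chain hchain hhead hlast (t := R.a) hx.1.le (by omega)
  have hp_outside : p.2 < R.c ∨ R.d < p.2 := by
    have := hactive p hpl
    simp only [Rect.Mem, hpa] at this
    omega
  simp only [manhattan] at hlen
  omega

/-- Graph-distance lower bound for detours: if source `(x_s, y)` and
destination `(x_d, y)` lie in the same row, on opposite sides of the obstacle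
`R = [a,b]×[c,d]` with `c ≤ y ≤ d`, then every path of active vertices
(vertices outside `R`) from source to destination has at least
`|x_s - x_d| + 2·min(y-(c-1), (d+1)-y)` edges. -/
theorem detour_lower_bound (R : Rect) (xs xd y : ℤ)
    (hx : xd < R.a ∧ R.b < xs) (hy : R.c ≤ y ∧ y ≤ R.d)
    (l : List (ℤ × ℤ))
    (hhead : l.head? = some (xs, y)) (hlast : l.getLast? = some (xd, y))
    (hchain : l.Chain' adj)
    (hactive : ∀ p ∈ l, ¬ R.Mem p) :
    (xs - xd).natAbs + 2 * min (y - (R.c - 1)).toNat ((R.d + 1) - y).toNat + 1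
      ≤ l.length :=
  detour_lower_bound_general R xs xd y hx l hhead hlast hchain hactive
end

section
/- There exists a placement of rectangles satisfying the ring condition, together with a source–destination pair and fixed a-priori detour direction choices at each router, such that the deterministic surrounding routing produces a trajectory that visits the same vertex infinitely often and never reaches the destination (i.e., fixed detour directions are not universally deadlock-free). -/
instance (R : Rect) (p : ℤ × ℤ) : Decidable (R.Mem p) := by
  unfold Rect.Mem; infer_instance

/-- Stateless surrounding routing where each router has an a-priori fixed
detour direction bit `guide p` (independent of the destination): when the XY
step is blocked, a horizontal blockage sends the packet north (`true`) or
south (`false`), a vertical blockage sends it west (`true`) or east (`false`). -/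
def fixedGuidedStep (blocked : ℤ × ℤ → Bool) (guide : ℤ × ℤ → Bool)
    (dst p : ℤ × ℤ) : ℤ × ℤ :=
  if p = dst then p
  else
    let q := xyStep dst p
    if blocked q then
      if q.2 = p.2 then (p.1, p.2 + (if guide p then 1 else -1))
      else (p.1 + (if guide p then -1 else 1), p.2)
    else q

/-- Fixed a-priori detour directions are not universally deadlock-free:
there is a valid placement (disjoint rectangles, each with a free surrounding
ring inside the grid), a source, a destination and a choice of fixed detour
directions such that the resulting trajectory visits some vertex infinitely
often and never reaches the destination. -/
theorem fixed_detour_directions_can_livelock :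
    ∃ (n m : ℕ) (P : Finset Rect) (guide : ℤ × ℤ → Bool) (s dst : ℤ × ℤ),
      (∀ R ∈ P, ∀ p, R.EnlMem p → p ∈ Grid n m) ∧
      (∀ R ∈ P, ∀ R' ∈ P, R ≠ R' → ∀ p, ¬ (R.Mem p ∧ R'.Mem p)) ∧
      (∀ R ∈ P, ∀ p, R.EnlMem p → ¬ R.Mem p → ∀ R' ∈ P, ¬ R'.Mem p) ∧
      s ∈ Grid n m ∧ dst ∈ Grid n m ∧
      (∀ R ∈ P, ¬ R.Mem s) ∧ (∀ R ∈ P, ¬ R.Mem dst) ∧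
      (∃ v : ℤ × ℤ,
        {k : ℕ |
          (fixedGuidedStep (fun p => decide (∃ R ∈ P, R.Mem p)) guide dst)^[k] s
            = v}.Infinite) ∧
      (∀ k : ℕ,
        (fixedGuidedStep (fun p => decide (∃ R ∈ P, R.Mem p)) guide dst)^[k] s
          ≠ dst) := by
  refine ⟨6, 4, {⟨2, 2, 1, 2, by norm_num, by norm_num⟩}, fun p => decide (p = (1,1)),
    (1,1), (5,1), ?_, ?_, ?_, ?_, ?_, ?_, ?_, ?_, ?_⟩
  · intro R hR p hp
    rw [Finset.mem_singleton] at hR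
    subst hR
    simp only [Rect.EnlMem] at hp
    obtain ⟨h1, h2, h3, h4⟩ := hp
    exact ⟨by omega, by omega, by omega, by omega⟩
  · intro R hR R' hR' hne
    rw [Finset.mem_singleton] at hR hR'
    exact absurd (hR.trans hR'.symm) hne
  · intro R hR p _ hnp R' hR'
    rw [Finset.mem_singleton] at hR hR'
    rwa [hR', ← hR]
  · exact ⟨by norm_num, by norm_num, by norm_num, by norm_num⟩
  · exact ⟨by norm_num, by norm_num, by norm_num, by norm_num⟩
  · intro R hR
    rw [Finset.mem_singleton] at hR
    subst hR
    rintro ⟨h, -⟩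
    norm_num at h
  · intro R hR
    rw [Finset.mem_singleton] at hR
    subst hR
    rintro ⟨-, h, -⟩
    norm_num at h
  all_goals
    have key : ∀ k : ℕ,
        (fixedGuidedStep
          (fun p => decide (∃ R ∈ ({⟨2, 2, 1, 2, by norm_num, by norm_num⟩} : Finset Rect), R.Mem p))
          (fun p => decide (p = (1,1))) (5,1))^[k] (1,1)
        = (if k % 2 = 0 then ((1:ℤ),(1:ℤ)) else ((1:ℤ),(2:ℤ))) := by
      intro k
      induction k with
      | zero => rfl
      | succ n ih =>
        rw [Function.iterate_succ_apply', ih]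
        rcases Nat.even_or_odd n with h | h
        · rw [Nat.even_iff] at h
          rw [if_pos h, if_neg (by omega)]
          decide
        · rw [Nat.odd_iff] at h
          rw [if_neg (by omega), if_pos (by omega)]
          decide
  · refine ⟨(1,1), Set.infinite_of_injective_forall_mem
      (f := fun j : ℕ => 2 * j) (fun a b hab => by dsimp only at hab; omega) ?_⟩
    intro j
    rw [Set.mem_setOf_eq, key (2*j), if_pos (Nat.mul_mod_right 2 j)]
  · intro k
    rw [key k]
    split <;> decide
end
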